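/- arXiv:1501.01400 — 8 statements merged into one kernel-verified Lean document; each statement's English description precedes it below -/
import Mathlib

section
/- Define κ(q) = q·ψ(q+1) for q ≥ 0, where ψ is the digamma function and γ the Euler–Mascheroni constant. Then κ(q) = -γ q + ∫_{-∞}^0 (e^{qx} - 1 - qx) · e^x/(1-e^x)^2 dx. -/
/-!
Both sides are the same series `∑_{n ≥ 1} q² / (n (n + q))`. On the integral side, substitute
`x = -y` and expand `e^{-y} / (1 - e^{-y})² = ∑_{n ≥ 1} n e^{-ny}`; each term integrates in
closed form against `e^{-qy} - 1 + qy ≥ 0`, so the sum and the integral may be exchanged. On the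
digamma side, the recurrence `ψ(x + 1) = ψ(x) + 1/x` together with the monotonicity of `ψ`
(convexity of `log Γ`) gives `ψ(x) + γ = ∑_{k ≥ 0} (1/(k + 1) - 1/(x + k))`.
-/

open Real MeasureTheory

noncomputable def digamma (x : ℝ) : ℝ := deriv (fun y => Real.log (Real.Gamma y)) x

open Set Filter Topology

lemma differentiableAt_log_Gamma {x : ℝ} (hx : 0 < x) :
    DifferentiableAt ℝ (fun y => log (Gamma y)) x :=
  (differentiableAt_Gamma fun m => ((neg_nonpos.mpr m.cast_nonneg).trans_lt hx).ne').log
    (Gamma_pos_of_pos hx).ne'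

lemma digamma_add_one {x : ℝ} (hx : 0 < x) : digamma (x + 1) = digamma x + x⁻¹ := by
  have h_rec : (fun y => log (Gamma (y + 1))) =ᶠ[𝓝 x] fun y => log (Gamma y) + log y := by
    filter_upwards [eventually_gt_nhds hx] with y hy
    rw [Gamma_add_one hy.ne', log_mul hy.ne' (Gamma_pos_of_pos hy).ne', add_comm]
  rw [digamma, ← deriv_comp_add_const, h_rec.deriv_eq,
    deriv_fun_add (differentiableAt_log_Gamma hx) (differentiableAt_log hx.ne'), deriv_log]
  rfl

lemma digamma_add_nat {x : ℝ} (hx : 0 < x) (n : ℕ) :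
    digamma (x + n) = digamma x + ∑ k ∈ Finset.range n, (x + k)⁻¹ := by
  induction n with
  | zero => simp
  | succ n ih =>
    rw [Nat.cast_succ, ← add_assoc, digamma_add_one (by positivity), ih, Finset.sum_range_succ,
      add_assoc]

lemma digamma_one : digamma 1 = -eulerMascheroniConstant := by
  simpa [digamma] using (hasDerivAt_Gamma_one.log (by simp)).deriv

lemma monotoneOn_digamma : MonotoneOn digamma (Ioi 0) :=
  convexOn_log_Gamma.monotoneOn_deriv fun _ hx => differentiableAt_log_Gamma hx

lemma tendsto_digamma_add_nat_sub_digamma_one_add_nat {x : ℝ} (hx : 1 ≤ x) :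
    Tendsto (fun N : ℕ => digamma (x + N) - digamma (1 + N)) atTop (𝓝 0) := by
  set m := ⌈x⌉₊
  have h_lower (N : ℕ) : 0 ≤ digamma (x + N) - digamma (1 + N) :=
    sub_nonneg.mpr <| monotoneOn_digamma (mem_Ioi.mpr (by positivity))
      (mem_Ioi.mpr (by positivity)) (by linarith)
  have h_upper (N : ℕ) : digamma (x + N) - digamma (1 + N) ≤ m * (1 / ((N : ℝ) + 1)) := by
    have h_shift : digamma (x + N) ≤ digamma (1 + N + m) :=
      monotoneOn_digamma (mem_Ioi.mpr (by positivity)) (mem_Ioi.mpr (by positivity))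
        (by linarith [Nat.le_ceil x])
    have h_sum : ∑ k ∈ Finset.range m, (1 + N + k : ℝ)⁻¹ ≤ m * (1 / ((N : ℝ) + 1)) := by
      simpa [add_comm] using Finset.sum_le_card_nsmul (Finset.range m) _ (1 / ((N : ℝ) + 1))
        fun k _ => by
          rw [one_div]; exact inv_anti₀ (by positivity) (by linarith [k.cast_nonneg (α := ℝ)])
    rw [digamma_add_nat (x := 1 + N) (by positivity)] at h_shift
    linarith
  refine squeeze_zero h_lower h_upper ?_
  simpa using tendsto_one_div_add_atTop_nhds_zero_nat.const_mul (m : ℝ)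

theorem hasSum_digamma_add_eulerMascheroniConstant {x : ℝ} (hx : 1 ≤ x) :
    HasSum (fun k : ℕ => ((k : ℝ) + 1)⁻¹ - (x + k)⁻¹)
      (digamma x + eulerMascheroniConstant) := by
  have h_nonneg (k : ℕ) : 0 ≤ ((k : ℝ) + 1)⁻¹ - (x + k)⁻¹ :=
    sub_nonneg.mpr <| inv_anti₀ (by positivity) (by linarith)
  have h_partial (N : ℕ) : ∑ k ∈ Finset.range N, (((k : ℝ) + 1)⁻¹ - (x + k)⁻¹) =
      digamma x + eulerMascheroniConstant - (digamma (x + N) - digamma (1 + N)) := by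
    rw [digamma_add_nat (by linarith), digamma_add_nat one_pos, digamma_one,
      Finset.sum_sub_distrib]
    simp only [add_comm (1 : ℝ)]
    ring
  rw [hasSum_iff_tendsto_nat_of_nonneg h_nonneg]
  simpa [h_partial] using
    tendsto_const_nhds.sub (tendsto_digamma_add_nat_sub_digamma_one_add_nat hx)

theorem hasSum_mul_digamma_add_one {q : ℝ} (hq : 0 ≤ q) :
    HasSum (fun k : ℕ => q ^ 2 / (((k : ℝ) + 1) * ((k : ℝ) + 1 + q)))
      (q * (digamma (q + 1) + eulerMascheroniConstant)) := by
  have h_terms : (fun k : ℕ => q ^ 2 / (((k : ℝ) + 1) * ((k : ℝ) + 1 + q))) =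
      fun k : ℕ => q * (((k : ℝ) + 1)⁻¹ - (q + 1 + k)⁻¹) := by
    funext k
    have : (0 : ℝ) < k + 1 := by positivity
    have : (0 : ℝ) < k + 1 + q := by positivity
    field_simp
    ring
  rw [h_terms]
  exact (hasSum_digamma_add_eulerMascheroniConstant (by linarith)).mul_left q

lemma exp_neg_sub_one_add_mul_mul_exp_nonneg (q : ℝ) {c : ℝ} (hc : 0 ≤ c) (y : ℝ) :
    0 ≤ (exp (-(q * y)) - 1 + q * y) * (c * exp (-(c * y))) :=
  mul_nonneg (by linarith [add_one_le_exp (-(q * y))]) (by positivity)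

theorem integral_Ioi_exp_neg_sub_one_add_mul_exp {q c : ℝ} (hc : 0 < c) (hqc : 0 < q + c) :
    IntegrableOn (fun y => (exp (-(q * y)) - 1 + q * y) * (c * exp (-(c * y)))) (Ioi 0) ∧
      ∫ y in Ioi 0, (exp (-(q * y)) - 1 + q * y) * (c * exp (-(c * y))) =
        q ^ 2 / (c * (c + q)) := by
  set F : ℝ → ℝ := fun y =>
    -(c / (q + c)) * exp (-((q + c) * y)) + (1 - q / c - q * y) * exp (-(c * y))
  have h_deriv : ∀ y ∈ Ici (0 : ℝ),
      HasDerivAt F ((exp (-(q * y)) - 1 + q * y) * (c * exp (-(c * y)))) y := by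
    intro y _
    have e1 : HasDerivAt (fun y => exp (-((q + c) * y)))
        (exp (-((q + c) * y)) * -(q + c)) y := by
      simpa using ((hasDerivAt_id y).const_mul (q + c)).neg.exp
    have e2 : HasDerivAt (fun y => exp (-(c * y))) (exp (-(c * y)) * -c) y := by
      simpa using ((hasDerivAt_id y).const_mul c).neg.exp
    have e3 : HasDerivAt (fun y => 1 - q / c - q * y) (-q) y := by
      simpa using ((hasDerivAt_id y).const_mul q).const_sub (1 - q / c)
    refine ((e1.const_mul _).add (e3.mul e2)).congr_deriv ?_
    rw [show -((q + c) * y) = -(q * y) + -(c * y) by ring, exp_add]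
    field_simp
    ring
  have h_nonneg : ∀ y ∈ Ioi (0 : ℝ), 0 ≤ (exp (-(q * y)) - 1 + q * y) * (c * exp (-(c * y))) :=
    fun y _ => exp_neg_sub_one_add_mul_mul_exp_nonneg q hc.le y
  have h_tendsto : Tendsto F atTop (𝓝 0) := by
    have h_decay (s b : ℝ) (hb : 0 < b) :
        Tendsto (fun y => y ^ s * exp (-(b * y))) atTop (𝓝 0) := by
      simpa only [neg_mul] using tendsto_rpow_mul_exp_neg_mul_atTop_nhds_zero s b hb
    have h_F : F = fun y => -(c / (q + c)) * (y ^ (0 : ℝ) * exp (-((q + c) * y))) +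
        ((1 - q / c) * (y ^ (0 : ℝ) * exp (-(c * y))) -
          q * (y ^ (1 : ℝ) * exp (-(c * y)))) := by
      funext y
      simp only [F, rpow_zero, rpow_one]
      ring
    rw [h_F]
    simpa using ((h_decay 0 _ hqc).const_mul (-(c / (q + c)))).add
      (((h_decay 0 c hc).const_mul (1 - q / c)).sub ((h_decay 1 c hc).const_mul q))
  refine ⟨integrableOn_Ioi_deriv_of_nonneg' h_deriv h_nonneg h_tendsto, ?_⟩
  rw [integral_Ioi_of_hasDerivAt_of_nonneg' h_deriv h_nonneg h_tendsto]
  simp only [F, mul_zero, neg_zero, exp_zero, mul_one, sub_zero]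
  have : c + q ≠ 0 := by linarith
  field_simp
  ring

lemma hasSum_mul_exp_neg_mul {y : ℝ} (hy : 0 < y) :
    HasSum (fun n : ℕ => ((n : ℝ) + 1) * exp (-(((n : ℝ) + 1) * y)))
      (exp (-y) / (1 - exp (-y)) ^ 2) := by
  have hr : ‖exp (-y)‖ < 1 := by
    rw [norm_of_nonneg (exp_pos _).le, exp_lt_one_iff]
    linarith
  have h := (hasSum_nat_add_iff' (G := ℝ) 1).mpr (hasSum_coe_mul_geometric_of_norm_lt_one hr)
  have h_terms : (fun n : ℕ => ((n + 1 : ℕ) : ℝ) * exp (-y) ^ (n + 1)) =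
      fun n : ℕ => ((n : ℝ) + 1) * exp (-(((n : ℝ) + 1) * y)) := by
    funext n
    rw [← exp_nat_mul]
    push_cast
    ring_nf
  rwa [h_terms, Finset.sum_range_one, Nat.cast_zero, zero_mul, sub_zero] at h

theorem hasSum_integral_Iio_exp_mul_sub_one_sub_mul {q : ℝ} (hq : 0 ≤ q) :
    HasSum (fun n : ℕ => q ^ 2 / (((n : ℝ) + 1) * ((n : ℝ) + 1 + q)))
      (∫ x in Iio 0, (exp (q * x) - 1 - q * x) * (exp x / (1 - exp x) ^ 2)) := by
  set F : ℕ → ℝ → ℝ := fun n y =>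
    (exp (-(q * y)) - 1 + q * y) * (((n : ℝ) + 1) * exp (-(((n : ℝ) + 1) * y)))
  have h_int (n : ℕ) := integral_Ioi_exp_neg_sub_one_add_mul_exp (q := q) (c := n + 1)
    (by positivity) (by positivity)
  have h_reflect : ∫ x in Iio 0, (exp (q * x) - 1 - q * x) * (exp x / (1 - exp x) ^ 2) =
      ∫ y in Ioi 0, ∑' n, F n y := by
    have h := integral_comp_neg_Ioi 0 fun x =>
      (exp (q * x) - 1 - q * x) * (exp x / (1 - exp x) ^ 2)
    simp only [neg_zero] at h
    rw [← integral_Iic_eq_integral_Iio, ← h]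
    refine setIntegral_congr_fun measurableSet_Ioi fun y hy => ?_
    rw [((hasSum_mul_exp_neg_mul hy).mul_left _).tsum_eq]
    simp only [mul_neg]
    ring
  have h_norm (n : ℕ) : ∫ y in Ioi 0, ‖F n y‖ = q ^ 2 / (((n : ℝ) + 1) * ((n : ℝ) + 1 + q)) := by
    rw [← (h_int n).2]
    exact setIntegral_congr_fun measurableSet_Ioi fun y _ =>
      norm_of_nonneg (exp_neg_sub_one_add_mul_mul_exp_nonneg q (by positivity) y)
  have h_sum := hasSum_integral_of_summable_integral_norm (F := F) (fun n => (h_int n).1)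
    (by simpa only [h_norm] using (hasSum_mul_digamma_add_one hq).summable)
  rwa [funext fun n => (h_int n).2, ← h_reflect] at h_sum

/-- Lévy–Khintchine representation of `κ(q) = q ψ(q+1)`:
`κ(q) = -γ q + ∫_{-∞}^0 (e^{qx} - 1 - qx) e^x/(1-e^x)^2 dx`. -/
theorem stmt_3 (q : ℝ) (hq : 0 ≤ q) :
    q * digamma (q + 1) =
      -Real.eulerMascheroniConstant * q +
        ∫ x in Set.Iio (0:ℝ),
          (Real.exp (q * x) - 1 - q * x) * (Real.exp x / (1 - Real.exp x) ^ 2) := by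
  rw [(hasSum_integral_Iio_exp_mul_sub_one_sub_mul hq).unique (hasSum_mul_digamma_add_one hq)]
  ring
end

section
/- Let X be a nonnegative random variable whose Mellin transform satisfies E[X^q] = Γ(q+1)/Γ(α q + 1) for all q ≥ 0, where 0 < α ≤ 1 is fixed, and for each i ≥ 2 let β_i be a Beta(1, i-1) random variable independent of X. Then for q > 1/α the series converges and E[X^q] + ∑_{i=2}^∞ (1-α) · E[(β_i^{α} X)^q] = ((q-1)/(α q - 1)) · Γ(q)/Γ(α q). -/
open MeasureTheory Real Filter Finset Topology

private lemma gamma_add_nat_aux (s : ℝ) (hs : 0 < s) (n : ℕ) :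
    Real.Gamma (s + n) = Real.Gamma s * ∏ j ∈ Finset.range n, (s + j) := by
  induction n with
  | zero => simp
  | succ n ih =>
    have h1 : s + (n : ℝ) ≠ 0 := by positivity
    rw [show s + ((n + 1 : ℕ) : ℝ) = (s + n) + 1 by push_cast; ring,
      Real.Gamma_add_one h1, ih, Finset.prod_range_succ]
    ring

private lemma tendsto_ratio_aux (s : ℝ) (hs : 1 < s) :
    Tendsto (fun n : ℕ => Real.Gamma ((n : ℝ) + 2) / Real.Gamma (s + (n : ℝ) + 1))
      atTop (𝓝 0) := by
  have hs0 : 0 < s := by linarith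
  have hΓs : Real.Gamma s ≠ 0 := (Real.Gamma_pos_of_pos hs0).ne'
  have h1 : Tendsto (fun n : ℕ => (n : ℝ) ^ (1 - s)) atTop (𝓝 0) := by
    have := (tendsto_rpow_neg_atTop (show (0:ℝ) < s - 1 by linarith)).comp
      (tendsto_natCast_atTop_atTop (R := ℝ))
    simpa [Function.comp_def, neg_sub] using this
  have h2 : Tendsto (fun n : ℕ => (n : ℝ) ^ (-s)) atTop (𝓝 0) :=
    (tendsto_rpow_neg_atTop hs0).comp (tendsto_natCast_atTop_atTop (R := ℝ))
  have hlim : Tendsto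
      (fun n : ℕ => ((n : ℝ) ^ (1 - s) + (n : ℝ) ^ (-s)) * Real.GammaSeq s n / Real.Gamma s)
      atTop (𝓝 0) := by
    have := ((h1.add h2).mul (Real.GammaSeq_tendsto_Gamma s)).div_const (Real.Gamma s)
    simpa using this
  refine hlim.congr' ?_
  filter_upwards [eventually_ge_atTop 1] with n hn
  have hn0 : (0 : ℝ) < n := by exact_mod_cast hn
  have hfac : Real.Gamma ((n : ℝ) + 2) = ((Nat.factorial (n+1) : ℕ) : ℝ) := by
    rw [show ((n : ℝ) + 2) = ((n + 1 : ℕ) : ℝ) + 1 by push_cast; ring]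
    exact_mod_cast Real.Gamma_nat_eq_factorial (n + 1)
  have hden : Real.Gamma (s + (n : ℝ) + 1) = Real.Gamma s * ∏ j ∈ range (n + 1), (s + j) := by
    rw [show s + (n : ℝ) + 1 = s + ((n + 1 : ℕ) : ℝ) by push_cast; ring]
    exact gamma_add_nat_aux s hs0 (n + 1)
  have hprod : (0 : ℝ) < ∏ j ∈ range (n + 1), (s + (j : ℝ)) :=
    Finset.prod_pos fun j _ => by positivity
  have hpow : ((n : ℝ) ^ (1 - s) + (n : ℝ) ^ (-s)) * (n : ℝ) ^ s = (n : ℝ) + 1 := by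
    rw [add_mul, ← Real.rpow_add hn0, ← Real.rpow_add hn0]
    norm_num
  rw [Real.GammaSeq, hfac, hden,
    show ((n : ℝ) ^ (1 - s) + (n : ℝ) ^ (-s)) * ((n : ℝ) ^ s * ((Nat.factorial n : ℕ) : ℝ) / ∏ j ∈ range (n + 1), (s + j))
        / Real.Gamma s
      = (((n : ℝ) ^ (1 - s) + (n : ℝ) ^ (-s)) * (n : ℝ) ^ s) * ((Nat.factorial n : ℕ) : ℝ)
        / (∏ j ∈ range (n + 1), (s + j)) / Real.Gamma s by ring, hpow]
  push_cast [Nat.factorial_succ]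
  field_simp

private lemma hasSum_aux (s : ℝ) (hs : 1 < s) :
    HasSum (fun n : ℕ => Real.Gamma ((n : ℝ) + 2) / Real.Gamma (s + (n : ℝ) + 2))
      (1 / ((s - 1) * Real.Gamma (s + 1))) := by
  have hs0 : 0 < s := by linarith
  set D : ℕ → ℝ := fun n => Real.Gamma ((n : ℝ) + 2) / ((s - 1) * Real.Gamma (s + (n : ℝ) + 1))
    with hD
  have hstep : ∀ n : ℕ,
      Real.Gamma ((n : ℝ) + 2) / Real.Gamma (s + (n : ℝ) + 2) = D n - D (n + 1) := by
    intro n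
    have hg1 : Real.Gamma ((n : ℝ) + 1 + 2) = ((n : ℝ) + 2) * Real.Gamma ((n : ℝ) + 2) := by
      rw [show (n : ℝ) + 1 + 2 = ((n : ℝ) + 2) + 1 by ring, Real.Gamma_add_one (by positivity)]
    have hg2 : Real.Gamma (s + (n : ℝ) + 2) = (s + (n : ℝ) + 1) * Real.Gamma (s + (n : ℝ) + 1) := by
      rw [show s + (n : ℝ) + 2 = (s + (n : ℝ) + 1) + 1 by ring,
        Real.Gamma_add_one (by positivity)]
    have hp1 : (0 : ℝ) < Real.Gamma (s + (n : ℝ) + 1) := Real.Gamma_pos_of_pos (by positivity)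
    have hp2 : (0 : ℝ) < s + (n : ℝ) + 1 := by positivity
    simp only [hD]
    push_cast
    rw [show s + ((n : ℝ) + 1) + 1 = s + (n : ℝ) + 2 by ring, hg1, hg2]
    have hne : s - 1 ≠ 0 := by linarith
    field_simp
    ring
  have hnonneg : ∀ n : ℕ, 0 ≤ Real.Gamma ((n : ℝ) + 2) / Real.Gamma (s + (n : ℝ) + 2) := by
    intro n
    have h1 : (0:ℝ) < Real.Gamma ((n : ℝ) + 2) := Real.Gamma_pos_of_pos (by positivity)
    have h2 : (0:ℝ) < Real.Gamma (s + (n : ℝ) + 2) := Real.Gamma_pos_of_pos (by positivity)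
    positivity
  rw [hasSum_iff_tendsto_nat_of_nonneg hnonneg]
  have hps : ∀ N : ℕ, ∑ i ∈ Finset.range N,
      Real.Gamma ((i : ℝ) + 2) / Real.Gamma (s + (i : ℝ) + 2) = D 0 - D N := by
    intro N
    rw [Finset.sum_congr rfl fun i _ => hstep i]
    exact Finset.sum_range_sub' D N
  have hDlim : Tendsto D atTop (𝓝 0) := by
    have := (tendsto_ratio_aux s hs).div_const (s - 1)
    simp only [zero_div] at this
    refine this.congr fun n => ?_
    simp only [hD]
    rw [div_div, mul_comm]
  have hD0 : D 0 = 1 / ((s - 1) * Real.Gamma (s + 1)) := by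
    simp only [hD]
    norm_num [Real.Gamma_two]
  simp only [hps]
  rw [← hD0, show D 0 = D 0 - 0 by ring]
  exact (tendsto_const_nhds.sub hDlim).congr fun N => by ring

/-- Moment identity for the total weight: if `X` has Mellin transform
`E[X^q] = Γ(q+1)/Γ(αq+1)` and, for `i ≥ 2`, `β i` is a Beta(1,i-1) variable
independent of `X`, then for `q > 1/α`,
`E[X^q] + ∑_{i=2}^∞ (1-α) E[(β_i^α X)^q] = ((q-1)/(αq-1)) Γ(q)/Γ(αq)`,
the series being convergent. Independence is encoded by the factorization of
moments of the products, and the Beta law by its moments. The sum over `i ≥ 2`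
is indexed by `i = n + 2`. -/
theorem stmt_7 {Ω : Type*} [MeasurableSpace Ω] (P : Measure Ω) [IsProbabilityMeasure P]
    (α : ℝ) (hα0 : 0 < α) (hα1 : α ≤ 1)
    (X : Ω → ℝ) (β : ℕ → Ω → ℝ)
    (hXpos : ∀ ω, 0 < X ω) (hβpos : ∀ i ω, 0 < β i ω)
    (hX : ∀ q : ℝ, 0 ≤ q → ∫ ω, X ω ^ q ∂P = Real.Gamma (q + 1) / Real.Gamma (α * q + 1))
    (hβ : ∀ i : ℕ, 2 ≤ i → ∀ r : ℝ, 0 ≤ r →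
      ∫ ω, β i ω ^ r ∂P = Real.Gamma (r + 1) * Real.Gamma i / Real.Gamma (r + i))
    (hindep : ∀ i : ℕ, 2 ≤ i → ∀ q : ℝ, 0 ≤ q →
      ∫ ω, (β i ω ^ α * X ω) ^ q ∂P = (∫ ω, β i ω ^ (α * q) ∂P) * ∫ ω, X ω ^ q ∂P)
    (q : ℝ) (hq : 1 / α < q) :
    Summable (fun n : ℕ => ∫ ω, (β (n + 2) ω ^ α * X ω) ^ q ∂P) ∧
      (∫ ω, X ω ^ q ∂P) +
          ∑' n : ℕ, (1 - α) * ∫ ω, (β (n + 2) ω ^ α * X ω) ^ q ∂P =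
        (q - 1) / (α * q - 1) * (Real.Gamma q / Real.Gamma (α * q)) := by
  have h1α : 1 ≤ 1 / α := by rw [le_div_iff₀ hα0]; linarith
  have hq1 : 1 < q := lt_of_le_of_lt h1α hq
  have hq0 : (0 : ℝ) ≤ q := by linarith
  have hs1 : 1 < α * q := by
    have := (div_lt_iff₀ hα0).mp hq
    nlinarith
  have hs0 : 0 < α * q := by linarith
  have hΓs1 : (0 : ℝ) < Real.Gamma (α * q + 1) := Real.Gamma_pos_of_pos (by linarith)
  have hF : ∀ n : ℕ, ∫ ω, (β (n + 2) ω ^ α * X ω) ^ q ∂P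
      = Real.Gamma (q + 1) * (Real.Gamma ((n : ℝ) + 2) / Real.Gamma (α * q + (n : ℝ) + 2)) := by
    intro n
    rw [hindep (n + 2) (by omega) q hq0, hβ (n + 2) (by omega) (α * q) hs0.le, hX q hq0]
    have hc : ((n + 2 : ℕ) : ℝ) = (n : ℝ) + 2 := by push_cast; ring
    rw [hc, show α * q + ((n : ℝ) + 2) = α * q + (n : ℝ) + 2 by ring]
    have h2 : (0 : ℝ) < Real.Gamma (α * q + (n : ℝ) + 2) := Real.Gamma_pos_of_pos (by positivity)
    field_simp
  have hsum := hasSum_aux (α * q) hs1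
  have hS : Summable (fun n : ℕ => ∫ ω, (β (n + 2) ω ^ α * X ω) ^ q ∂P) :=
    ((hsum.summable.mul_left (Real.Gamma (q + 1)))).congr fun n => (hF n).symm
  refine ⟨hS, ?_⟩
  have ht : HasSum (fun n : ℕ => (1 - α) * ∫ ω, (β (n + 2) ω ^ α * X ω) ^ q ∂P)
      ((1 - α) * (Real.Gamma (q + 1) * (1 / ((α * q - 1) * Real.Gamma (α * q + 1))))) := by
    have h2 : (fun n : ℕ => (1 - α) * ∫ ω, (β (n + 2) ω ^ α * X ω) ^ q ∂P)
        = fun n : ℕ => (1 - α) * (Real.Gamma (q + 1)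
            * (Real.Gamma ((n : ℝ) + 2) / Real.Gamma (α * q + (n : ℝ) + 2))) :=
      funext fun n => by rw [hF n]
    rw [h2]
    exact (hsum.mul_left _).mul_left _
  rw [ht.tsum_eq, hX q hq0, Real.Gamma_add_one (by linarith : q ≠ 0),
    Real.Gamma_add_one (by linarith : α * q ≠ 0)]
  have hΓq : (0 : ℝ) < Real.Gamma q := Real.Gamma_pos_of_pos (by linarith)
  have hΓaq : (0 : ℝ) < Real.Gamma (α * q) := Real.Gamma_pos_of_pos hs0
  have hne : α * q - 1 ≠ 0 := by linarith
  field_simp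
  have hx : (-1 + α * q) * (-1 + α * q)⁻¹ = 1 := mul_inv_cancel₀ (by linarith)
  linear_combination -hx
end

section
/- For fixed α ∈ (0,1) and q > 1/α, the series ∑_{i=2}^∞ Γ(i)/Γ(α q + i) converges and (1-α)·Γ(q+1)·∑_{i=2}^∞ Γ(i)/Γ(αq+i) + Γ(q+1)/Γ(αq+1) = ((q-1)/(αq-1))·Γ(q)/Γ(αq). -/
open Real Filter

lemma key_hasSum {s : ℝ} (hs : 1 < s) :
    HasSum (fun n : ℕ => Real.Gamma (n + 2) / Real.Gamma (s + (n + 2)))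
      (1 / ((s - 1) * Real.Gamma (s + 1))) := by
  have hs0 : 0 < s := lt_trans one_pos hs
  set F : ℕ → ℝ := fun n => Real.Gamma (n + 2) / ((s - 1) * Real.Gamma (s + n + 1)) with hF
  have hGpos : ∀ x : ℝ, 0 < x → 0 < Real.Gamma x := fun x hx => Real.Gamma_pos_of_pos hx
  have hpos2 : ∀ n : ℕ, (0:ℝ) < (n:ℝ) + 2 := fun n => by positivity
  have hposS : ∀ n : ℕ, (0:ℝ) < s + n + 1 := fun n => by positivity
  have htel : ∀ n : ℕ, Real.Gamma (n + 2) / Real.Gamma (s + (n + 2)) = F n - F (n + 1) := by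
    intro n
    have h1 : Real.Gamma (s + ((n:ℝ) + 2)) = (s + n + 1) * Real.Gamma (s + n + 1) := by
      have := Real.Gamma_add_one (show (s + (n:ℝ) + 1) ≠ 0 by positivity)
      rw [← this]; ring_nf
    have h2 : Real.Gamma ((n:ℝ) + 1 + 2) = ((n:ℝ) + 2) * Real.Gamma ((n:ℝ) + 2) := by
      have := Real.Gamma_add_one (show ((n:ℝ) + 2) ≠ 0 by positivity)
      rw [← this]; ring_nf
    have h3 : Real.Gamma (s + ((n:ℝ)+1) + 1) = Real.Gamma (s + ((n:ℝ) + 2)) := by ring_nf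
    simp only [hF]
    push_cast
    rw [h3, h1, h2]
    have g1 : Real.Gamma ((n:ℝ) + 2) ≠ 0 := ne_of_gt (hGpos _ (hpos2 n))
    have g2 : Real.Gamma (s + n + 1) ≠ 0 := ne_of_gt (hGpos _ (hposS n))
    have g3 : s - 1 ≠ 0 := by linarith
    have g4 : s + (n:ℝ) + 1 ≠ 0 := ne_of_gt (hposS n)
    field_simp
    ring
  have hterm_nonneg : ∀ n : ℕ, 0 ≤ Real.Gamma (n + 2) / Real.Gamma (s + (n + 2)) := by
    intro n
    have := hGpos _ (hpos2 n)
    have h2 : (0:ℝ) < s + ((n:ℝ)+2) := by positivity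
    have := hGpos _ h2
    positivity
  -- F tends to 0
  have hbound : ∀ n : ℕ, ((n:ℝ)+1) ^ (s-1) * Real.Gamma ((n:ℝ)+2) ≤ Real.Gamma (s + n + 1) := by
    intro n
    have hx : ((n:ℝ)+1) ∈ Set.Ioi (0:ℝ) := by simp; positivity
    have hz : (s + (n:ℝ) + 1) ∈ Set.Ioi (0:ℝ) := by simp; positivity
    have hxy : ((n:ℝ)+1) < (n:ℝ)+2 := by linarith
    have hyz : ((n:ℝ)+2) < s + n + 1 := by linarith
    have hslope := Real.convexOn_log_Gamma.slope_mono_adjacent hx hz hxy hyz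
    simp only [Function.comp] at hslope
    have e1 : ((n:ℝ)+2) - ((n:ℝ)+1) = 1 := by ring
    rw [e1, div_one] at hslope
    have h2 : Real.Gamma ((n:ℝ)+2) = ((n:ℝ)+1) * Real.Gamma ((n:ℝ)+1) := by
      have := Real.Gamma_add_one (show ((n:ℝ) + 1) ≠ 0 by positivity)
      rw [← this]; ring_nf
    have hg1pos : 0 < Real.Gamma ((n:ℝ)+1) := hGpos _ (by positivity)
    have hn1pos : (0:ℝ) < (n:ℝ)+1 := by positivity
    have hl : Real.log (Real.Gamma ((n:ℝ)+2)) - Real.log (Real.Gamma ((n:ℝ)+1))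
        = Real.log ((n:ℝ)+1) := by
      rw [h2, Real.log_mul (ne_of_gt hn1pos) (ne_of_gt hg1pos)]; ring
    rw [hl] at hslope
    -- hslope : log(n+1) ≤ (log Γ(s+n+1) - log Γ(n+2)) / (s+n+1 - (n+2))
    have e2 : s + (n:ℝ) + 1 - ((n:ℝ)+2) = s - 1 := by ring
    rw [e2] at hslope
    have hs1 : (0:ℝ) < s - 1 := by linarith
    have hm : (s-1) * Real.log ((n:ℝ)+1)
        ≤ Real.log (Real.Gamma (s + n + 1)) - Real.log (Real.Gamma ((n:ℝ)+2)) := by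
      have := mul_le_mul_of_nonneg_left hslope (le_of_lt hs1)
      rwa [mul_div_cancel₀ _ (ne_of_gt hs1)] at this
    have g2pos : 0 < Real.Gamma ((n:ℝ)+2) := hGpos _ (hpos2 n)
    have gSpos : 0 < Real.Gamma (s + n + 1) := hGpos _ (hposS n)
    calc ((n:ℝ)+1) ^ (s-1) * Real.Gamma ((n:ℝ)+2)
        = Real.exp ((s-1) * Real.log ((n:ℝ)+1) + Real.log (Real.Gamma ((n:ℝ)+2))) := by
          rw [Real.exp_add, Real.rpow_def_of_pos hn1pos, Real.exp_log g2pos]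
          ring_nf
      _ ≤ Real.exp (Real.log (Real.Gamma (s + n + 1))) := by
          apply Real.exp_le_exp.mpr; linarith
      _ = Real.Gamma (s + n + 1) := Real.exp_log gSpos
  have hFto : Tendsto F atTop (nhds 0) := by
    have hs1 : (0:ℝ) < s - 1 := by linarith
    have hub : ∀ n : ℕ, F n ≤ ((s - 1) * ((n:ℝ)+1) ^ (s-1))⁻¹ := by
      intro n
      have g2pos : 0 < Real.Gamma ((n:ℝ)+2) := hGpos _ (hpos2 n)
      have gSpos : 0 < Real.Gamma (s + n + 1) := hGpos _ (hposS n)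
      have hn1 : (0:ℝ) < ((n:ℝ)+1) ^ (s-1) := by positivity
      rw [hF]
      rw [inv_eq_one_div, div_le_div_iff₀ (by positivity) (by positivity)]
      calc Real.Gamma ((n:ℝ)+2) * ((s-1) * ((n:ℝ)+1)^(s-1))
          = (s-1) * (((n:ℝ)+1)^(s-1) * Real.Gamma ((n:ℝ)+2)) := by ring
        _ ≤ (s-1) * Real.Gamma (s + n + 1) := by
            exact mul_le_mul_of_nonneg_left (hbound n) (le_of_lt hs1)
        _ = 1 * ((s-1) * Real.Gamma (s+n+1)) := by ring
    have hlb : ∀ n : ℕ, 0 ≤ F n := by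
      intro n
      have := hGpos _ (hpos2 n); have := hGpos _ (hposS n)
      have : (0:ℝ) < s - 1 := hs1
      rw [hF]; positivity
    have htend : Tendsto (fun n : ℕ => ((s - 1) * ((n:ℝ)+1) ^ (s-1))⁻¹) atTop (nhds 0) := by
      apply Tendsto.inv_tendsto_atTop
      apply Tendsto.const_mul_atTop hs1
      exact (tendsto_rpow_atTop hs1).comp
        (tendsto_atTop_add_const_right _ 1 tendsto_natCast_atTop_atTop)
    exact squeeze_zero hlb hub htend
  rw [hasSum_iff_tendsto_nat_of_nonneg hterm_nonneg]
  have hps : ∀ N : ℕ, ∑ n ∈ Finset.range N, Real.Gamma (n + 2) / Real.Gamma (s + (n + 2))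
      = F 0 - F N := by
    intro N
    rw [← Finset.sum_range_sub' F N]
    exact Finset.sum_congr rfl fun n _ => htel n
  have hF0 : F 0 = 1 / ((s - 1) * Real.Gamma (s + 1)) := by
    simp only [hF]
    norm_num [Real.Gamma_two]
  simp only [hps]
  rw [← hF0]
  have : Tendsto (fun N => F 0 - F N) atTop (nhds (F 0 - 0)) :=
    (tendsto_const_nhds).sub hFto
  simpa using this

/-- For `α ∈ (0,1)` and `q > 1/α`, the series `∑_{i=2}^∞ Γ(i)/Γ(αq+i)` converges and
`(1-α) Γ(q+1) ∑_{i=2}^∞ Γ(i)/Γ(αq+i) + Γ(q+1)/Γ(αq+1) = ((q-1)/(αq-1)) Γ(q)/Γ(αq)`.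
(The sum over `i ≥ 2` is indexed by `i = n + 2`.) -/
theorem stmt_8 (α q : ℝ) (hα0 : 0 < α) (hα1 : α < 1) (hq : 1 / α < q) :
    Summable (fun n : ℕ => Real.Gamma (n + 2) / Real.Gamma (α * q + (n + 2))) ∧
      (1 - α) * Real.Gamma (q + 1) *
          (∑' n : ℕ, Real.Gamma (n + 2) / Real.Gamma (α * q + (n + 2))) +
        Real.Gamma (q + 1) / Real.Gamma (α * q + 1) =
      (q - 1) / (α * q - 1) * (Real.Gamma q / Real.Gamma (α * q)) := by
  have hs : 1 < α * q := by
    have := (div_lt_iff₀ hα0).mp hq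
    linarith [this]
  have hq1 : 1 < q := by
    have h1 : 1 < 1 / α := by
      rw [lt_div_iff₀ hα0]; linarith
    linarith
  have h := key_hasSum hs
  refine ⟨h.summable, ?_⟩
  rw [h.tsum_eq]
  have hqpos : (0:ℝ) < q := by linarith
  have hspos : (0:ℝ) < α * q := by linarith
  have hG1 : Real.Gamma (q + 1) = q * Real.Gamma q :=
    Real.Gamma_add_one (ne_of_gt hqpos)
  have hG2 : Real.Gamma (α * q + 1) = (α * q) * Real.Gamma (α * q) :=
    Real.Gamma_add_one (ne_of_gt hspos)
  have hGq : Real.Gamma (α * q) ≠ 0 := ne_of_gt (Real.Gamma_pos_of_pos hspos)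
  have hs1 : α * q - 1 ≠ 0 := by intro h'; linarith [sub_eq_zero.mp h']
  rw [hG1, hG2]
  field_simp
  ring
end

section
/- For k ≥ 2 and k₁, k₂ ≥ 1 with k₁ + k₂ = k, the probability that removing a uniformly random edge of a random recursive tree on k vertices leaves the root-subtree with k₁ vertices and the detached subtree with k₂ vertices equals k/(k₂(k₂+1)(k-1)). -/
/-!
Deleting the last vertex of a recursive tree on `n + 2` vertices leaves a recursive tree on
`n + 1` vertices together with the parent `p` of the deleted leaf, and this is a bijection.
Re-attaching the leaf creates one new edge, which detaches one vertex, and enlarges the subtree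
below an old edge by one exactly when `p` lies in it. Summing over `p`, the number `N k s` of
pairs (tree, edge) on `k` vertices whose edge detaches `s` vertices satisfies
`N (n+2) (t+1) = [t = 0] (n+1)! + t N (n+1) t + (n - t) N (n+1) (t+1)`,
which `N k s = k! / (s (s + 1))` solves. There are `(k-1)! (k-1)` pairs in total.
-/

open scoped Classical

/-- A (parent function of a) recursive tree on vertices `{0, …, k-1}`, rooted at `0`:
each nonzero vertex points to a smaller parent, and the root points to itself. -/
def IsRecursiveParent {k : ℕ} (f : Fin k → Fin k) : Prop :=
  ∀ i : Fin k, (i.1 = 0 → f i = i) ∧ (i.1 ≠ 0 → (f i).1 < i.1)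

open Finset Function Nat

abbrev RecursiveTree (k : ℕ) := {f : Fin k → Fin k // IsRecursiveParent f}

lemma IsRecursiveParent.val_apply_le {k : ℕ} {f : Fin k → Fin k} (hf : IsRecursiveParent f)
    (i : Fin k) : (f i).1 ≤ i.1 := by
  by_cases h : i.1 = 0
  · rw [(hf i).1 h]
  · exact ((hf i).2 h).le

lemma card_filter_card_add_ite_mem {α : Type*} [Fintype α] [DecidableEq α] (S : Finset α)
    (t : ℕ) :
    #{a | #S + (if a ∈ S then 1 else 0) = t + 1} =
      t * (if #S = t then 1 else 0) +
        (Fintype.card α - (t + 1)) * (if #S = t + 1 then 1 else 0) := by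
  by_cases h : #S = t
  · have : ({a | #S + (if a ∈ S then 1 else 0) = t + 1} : Finset α) = S := by
      ext a; by_cases a ∈ S <;> simp [*]
    rw [this, h]
    simp
  by_cases h' : #S = t + 1
  · have : ({a | #S + (if a ∈ S then 1 else 0) = t + 1} : Finset α) = Sᶜ := by
      ext a; by_cases a ∈ S <;> simp [*]
    rw [this, card_compl, h']
    simp
  · have : ({a | #S + (if a ∈ S then 1 else 0) = t + 1} : Finset α) = ∅ := by
      ext a; by_cases a ∈ S <;> simp [*]
    rw [this]
    simp [h, h']

lemma card_fin_val_ne_zero (n : ℕ) : Fintype.card {e : Fin (n + 1) // e.1 ≠ 0} = n := by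
  rw [Fintype.card_subtype_compl]
  simp

noncomputable def descendants {k : ℕ} (f : Fin k → Fin k) (e : Fin k) : Finset (Fin k) :=
  {j | ∃ m, f^[m] j = e}

lemma mem_descendants {k : ℕ} {f : Fin k → Fin k} {e j : Fin k} :
    j ∈ descendants f e ↔ ∃ m, f^[m] j = e := by
  simp [descendants]

-- An edge is named by its lower endpoint `e ≠ 0`; cutting it detaches `descendants f e`.
noncomputable def cutCount {k : ℕ} (f : Fin k → Fin k) (s : ℕ) : ℕ :=
  #{e : Fin k | e.1 ≠ 0 ∧ #(descendants f e) = s}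

section AddLeaf

variable {n : ℕ} (f : Fin (n + 1) → Fin (n + 1)) (p : Fin (n + 1))

def addLeaf : Fin (n + 2) → Fin (n + 2) :=
  Fin.snoc (α := fun _ => Fin (n + 2)) (fun i => (f i).castSucc) p.castSucc

@[simp]
lemma addLeaf_castSucc (i : Fin (n + 1)) : addLeaf f p i.castSucc = (f i).castSucc :=
  Fin.snoc_castSucc ..

@[simp]
lemma addLeaf_last : addLeaf f p (Fin.last _) = p.castSucc :=
  Fin.snoc_last ..

lemma iterate_addLeaf_castSucc (m : ℕ) (i : Fin (n + 1)) :
    (addLeaf f p)^[m] i.castSucc = (f^[m] i).castSucc := by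
  induction m generalizing i with
  | zero => rfl
  | succ m ih => simp only [iterate_succ_apply, addLeaf_castSucc, ih]

variable {f} in
lemma IsRecursiveParent.addLeaf (hf : IsRecursiveParent f) :
    IsRecursiveParent (addLeaf f p) := by
  refine Fin.lastCases ?_ (fun i => ?_)
  · simp only [addLeaf_last, Fin.val_last, Fin.val_castSucc]
    exact ⟨by omega, fun _ => p.isLt⟩
  · simp only [addLeaf_castSucc, Fin.val_castSucc, Fin.castSucc_inj]
    exact hf i

lemma descendants_addLeaf_last : descendants (addLeaf f p) (Fin.last _) = {Fin.last _} := by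
  ext j
  refine Fin.lastCases ?_ (fun i => ?_) j
  · simpa using mem_descendants.2 ⟨0, rfl⟩
  · simp [mem_descendants, iterate_addLeaf_castSucc, Fin.castSucc_ne_last]

lemma castSucc_mem_descendants_addLeaf (i j : Fin (n + 1)) :
    j.castSucc ∈ descendants (addLeaf f p) i.castSucc ↔ j ∈ descendants f i := by
  simp [mem_descendants, iterate_addLeaf_castSucc]

lemma last_mem_descendants_addLeaf (i : Fin (n + 1)) :
    Fin.last _ ∈ descendants (addLeaf f p) i.castSucc ↔ p ∈ descendants f i := by
  simp only [mem_descendants]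
  constructor
  · rintro ⟨_ | m, hm⟩
    · exact absurd hm.symm (Fin.castSucc_ne_last i)
    · rw [iterate_succ_apply, addLeaf_last, iterate_addLeaf_castSucc] at hm
      exact ⟨m, Fin.castSucc_injective _ hm⟩
  · rintro ⟨m, hm⟩
    exact ⟨m + 1, by rw [iterate_succ_apply, addLeaf_last, iterate_addLeaf_castSucc, hm]⟩

lemma card_descendants_addLeaf_castSucc (i : Fin (n + 1)) :
    #(descendants (addLeaf f p) i.castSucc) =
      #(descendants f i) + if p ∈ descendants f i then 1 else 0 := by
  rw [card_eq_sum_ite (subset_univ (descendants _ _)), Fin.sum_univ_castSucc]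
  simp only [castSucc_mem_descendants_addLeaf, last_mem_descendants_addLeaf]
  rw [← card_eq_sum_ite (subset_univ _)]

lemma cutCount_addLeaf_succ (t : ℕ) :
    cutCount (addLeaf f p) (t + 1) = (if t = 0 then 1 else 0) +
      #{i | i.1 ≠ 0 ∧ #(descendants f i) + (if p ∈ descendants f i then 1 else 0) = t + 1} := by
  rw [cutCount, card_filter, card_filter, Fin.sum_univ_castSucc, add_comm]
  simp [descendants_addLeaf_last, card_descendants_addLeaf_castSucc, eq_comm (a := 1)]

lemma sum_cutCount_addLeaf_succ (t : ℕ) :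
    ∑ p, cutCount (addLeaf f p) (t + 1) =
      (if t = 0 then n + 1 else 0) + t * cutCount f t + (n - t) * cutCount f (t + 1) := by
  have per_vertex (i : Fin (n + 1)) :
      #{p | i.1 ≠ 0 ∧ #(descendants f i) + (if p ∈ descendants f i then 1 else 0) = t + 1} =
        t * (if i.1 ≠ 0 ∧ #(descendants f i) = t then 1 else 0) +
          (n - t) * (if i.1 ≠ 0 ∧ #(descendants f i) = t + 1 then 1 else 0) := by
    by_cases hi : i.1 = 0
    · simp [hi]
    · simpa [hi] using card_filter_card_add_ite_mem (descendants f i) t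
  have double_count :
      ∑ p, #{i | i.1 ≠ 0 ∧ #(descendants f i) + (if p ∈ descendants f i then 1 else 0) = t + 1} =
        ∑ i, #{p | i.1 ≠ 0 ∧
          #(descendants f i) + (if p ∈ descendants f i then 1 else 0) = t + 1} :=
    sum_card_bipartiteAbove_eq_sum_card_bipartiteBelow _
  simp only [cutCount_addLeaf_succ, sum_add_distrib, double_count, per_vertex, ← mul_sum]
  simp [add_assoc, cutCount]

end AddLeaf

def IsRecursiveParent.dropLast {n : ℕ} {F : Fin (n + 2) → Fin (n + 2)}
    (hF : IsRecursiveParent F) (i : Fin (n + 1)) : Fin (n + 1) :=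
  (F i.castSucc).castLT ((hF.val_apply_le _).trans_lt i.isLt)

lemma IsRecursiveParent.isRecursiveParent_dropLast {n : ℕ} {F : Fin (n + 2) → Fin (n + 2)}
    (hF : IsRecursiveParent F) : IsRecursiveParent hF.dropLast := fun i =>
  ⟨fun h => Fin.ext (by simp [dropLast, (hF i.castSucc).1 h]), (hF i.castSucc).2⟩

def recursiveTreeSuccEquiv (n : ℕ) :
    RecursiveTree (n + 2) ≃ RecursiveTree (n + 1) × Fin (n + 1) where
  toFun F := (⟨F.2.dropLast, F.2.isRecursiveParent_dropLast⟩,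
    (F.1 (Fin.last _)).castLT ((F.2 _).2 (by simp)))
  invFun fp := ⟨addLeaf fp.1.1 fp.2, fp.1.2.addLeaf fp.2⟩
  left_inv F := Subtype.ext <| funext <| Fin.lastCases (by simp) fun i => by
    simp [IsRecursiveParent.dropLast]
  right_inv fp := by
    ext i <;> simp [IsRecursiveParent.dropLast]

lemma card_recursiveTree (n : ℕ) : Fintype.card (RecursiveTree (n + 1)) = n ! := by
  induction n with
  | zero =>
    refine Fintype.card_eq_one_iff.mpr ⟨⟨id, fun i => ⟨fun _ => rfl, ?_⟩⟩, fun _ => ?_⟩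
    · simp
    · exact Subtype.ext (funext fun _ => Subsingleton.elim (α := Fin 1) _ _)
  | succ n ih =>
    rw [Fintype.card_congr (recursiveTreeSuccEquiv n), Fintype.card_prod, ih, Fintype.card_fin,
      factorial_succ, mul_comm]

noncomputable def cutPairCount (k s : ℕ) : ℕ :=
  #{x : RecursiveTree k × {e : Fin k // e.1 ≠ 0} | #(descendants x.1.1 x.2.1) = s}

lemma cutPairCount_eq_sum (k s : ℕ) :
    cutPairCount k s = ∑ f : RecursiveTree k, cutCount f.1 s := by
  rw [cutPairCount, card_filter, Fintype.sum_prod_type]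
  refine sum_congr rfl fun f _ => ?_
  rw [cutCount, ← filter_filter, card_filter]
  exact (sum_subtype (p := fun e : Fin k => e.1 ≠ 0) {e | e.1 ≠ 0} (by simp)
    fun e => if #(descendants f.1 e) = s then 1 else 0).symm

lemma cutPairCount_succ_succ (n t : ℕ) :
    cutPairCount (n + 2) (t + 1) = (if t = 0 then (n + 1)! else 0) +
      t * cutPairCount (n + 1) t + (n - t) * cutPairCount (n + 1) (t + 1) := by
  simp only [cutPairCount_eq_sum, ← (recursiveTreeSuccEquiv n).symm.sum_comp,
    Fintype.sum_prod_type, recursiveTreeSuccEquiv, Equiv.coe_fn_symm_mk, sum_cutCount_addLeaf_succ,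
    sum_add_distrib, ← mul_sum, sum_const, smul_eq_mul]
  rw [Finset.card_univ, card_recursiveTree]
  split_ifs <;> simp [factorial_succ, mul_comm]

lemma cutPairCount_mul_eq_factorial (n t : ℕ) (ht : t + 1 ≤ n) :
    cutPairCount (n + 1) (t + 1) * ((t + 1) * (t + 2)) = (n + 1)! := by
  induction n generalizing t with
  | zero => omega
  | succ n ih =>
    have ih_self : t * cutPairCount (n + 1) t * (t + 1) = if t = 0 then 0 else (n + 1)! := by
      rcases t with _ | u
      · simp
      · rw [← ih u (by omega)]
        simp only [add_eq_zero, one_ne_zero, and_false, if_false]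
        ring
    have ih_succ : (n - t) * cutPairCount (n + 1) (t + 1) * ((t + 1) * (t + 2)) =
        (n - t) * (n + 1)! := by
      rcases Nat.lt_or_ge t n with h | h
      · rw [mul_assoc, ih t h]
      · simp [Nat.sub_eq_zero_of_le h]
    rw [cutPairCount_succ_succ, factorial_succ (n + 1)]
    obtain ⟨d, rfl⟩ : ∃ d, n = t + d := ⟨n - t, by omega⟩
    rw [Nat.add_sub_cancel_left] at ih_succ ⊢
    rcases t with _ | u
    · simp only [if_true, zero_mul, add_zero] at ih_succ ⊢
      linear_combination ih_succ
    · simp only [add_eq_zero, one_ne_zero, and_false, if_false, zero_add] at ih_self ⊢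
      linear_combination (u + 3) * ih_self + ih_succ

theorem stmt_9_general (k k₁ k₂ : ℕ) (h₁ : 1 ≤ k₁) (h₂ : 1 ≤ k₂)
    (hsum : k₁ + k₂ = k) :
    ((Finset.univ.filter
        (fun p : {f : Fin k → Fin k // IsRecursiveParent f} × {e : Fin k // e.1 ≠ 0} =>
          (Finset.univ.filter
            (fun j : Fin k => ∃ m : ℕ, (p.1.1)^[m] j = p.2.1)).card = k₂)).card : ℝ) /
      ((Finset.univ : Finset
        ({f : Fin k → Fin k // IsRecursiveParent f} × {e : Fin k // e.1 ≠ 0})).card : ℝ) =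
      (k : ℝ) / (k₂ * (k₂ + 1) * ((k : ℝ) - 1)) := by
  obtain ⟨n, t, rfl, rfl, htn⟩ : ∃ n t, k = n + 2 ∧ k₂ = t + 1 ∧ t ≤ n :=
    ⟨k - 2, k₂ - 1, by omega, by omega, by omega⟩
  have count :
      (cutPairCount (n + 2) (t + 1) : ℝ) * ((t + 1) * (t + 2)) = (n + 2) * (n + 1)! := by
    exact_mod_cast (cutPairCount_mul_eq_factorial (n + 1) t (by omega)).trans (factorial_succ _)
  change (cutPairCount (n + 2) (t + 1) : ℝ) / _ = _
  rw [Finset.card_univ, Fintype.card_prod, card_recursiveTree, card_fin_val_ne_zero]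
  push_cast
  rw [show (n : ℝ) + 2 - 1 = n + 1 by ring, div_eq_div_iff (by positivity) (by positivity)]
  linear_combination (n + 1 : ℝ) * count

/-- Meir–Moon formula: for a uniformly random recursive tree on `k` vertices together with
a uniformly random edge (identified with its lower endpoint `e ≠ root`), the probability
that the subtree detached by removing the edge has `k₂` vertices (so that the root
subtree has `k₁ = k - k₂` vertices) equals `k / (k₂ (k₂+1) (k-1))`. A vertex `j` is in
the detached subtree iff iterating the parent map from `j` reaches `e`. -/
theorem stmt_9 (k k₁ k₂ : ℕ) (hk : 2 ≤ k) (h₁ : 1 ≤ k₁) (h₂ : 1 ≤ k₂)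
    (hsum : k₁ + k₂ = k) :
    ((Finset.univ.filter
        (fun p : {f : Fin k → Fin k // IsRecursiveParent f} × {e : Fin k // e.1 ≠ 0} =>
          (Finset.univ.filter
            (fun j : Fin k => ∃ m : ℕ, (p.1.1)^[m] j = p.2.1)).card = k₂)).card : ℝ) /
      ((Finset.univ : Finset
        ({f : Fin k → Fin k // IsRecursiveParent f} × {e : Fin k // e.1 ≠ 0})).card : ℝ) =
      (k : ℝ) / (k₂ * (k₂ + 1) * ((k : ℝ) - 1)) :=
  stmt_9_general k k₁ k₂ h₁ h₂ hsum
end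

section
/- Let p ∈ (0,1), q₁, q₂ ≥ 0 and q = q₁ + q₂. Then E[X₁^{q₁} X₂^{q₂}] where the joint Mellin transform is given by (1-p) Γ(q₂+1) ∑_{k=2}^∞ (k-1) p^{k-2} Γ(q₁+k-1)/Γ(pq+k) satisfies: as p → 1 (equivalently t = -ln p → 0+), (1/(1-p)) · (1-p) Γ(q₂+1) ∑_{k=2}^∞ (k-1) p^{k-2} Γ(q₁+k-1)/Γ(pq+k) converges, provided q₂ > 1, to ∫_0^1 (1-x)^{q₁} x^{q₂-2} dx. -/
/-!
Expanding `(1 - x)⁻² = ∑ (n + 1) xⁿ` inside the Beta integral and integrating term by term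
(all terms are nonnegative) gives
`∫₀¹ x^q₁ (1 - x)^(q₂ - 2) dx = Γ(q₂ + 1) ∑ (n + 1) Γ(q₁ + n + 1) / Γ(q₁ + q₂ + n + 2)`,
the value of the series at `p = 1`. Continuity at `p = 1⁻` is dominated convergence for series:
since `Γ` increases on `[2, ∞)`, for `p₀ ≤ p ≤ 1` the `n`-th term is at most
`(n + 1) Γ(q₁ + n + 1) / Γ(p₀ (q₁ + q₂) + n + 2)`, and choosing `p₀ (q₁ + q₂) > q₁ + 1`
(possible because `q₂ > 1`) makes this majorant summable by the same Beta expansion.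
-/

open Real Filter MeasureTheory Set

lemma ofReal_rpow_mul_one_sub_rpow {x : ℝ} (hx : x ∈ Icc 0 1) (a b : ℝ) :
    ((x ^ a * (1 - x) ^ b : ℝ) : ℂ) =
      (x : ℂ) ^ ((a : ℂ) + 1 - 1) * (1 - (x : ℂ)) ^ ((b : ℂ) + 1 - 1) := by
  rw [add_sub_cancel_right, add_sub_cancel_right, Complex.ofReal_mul,
    Complex.ofReal_cpow hx.1, Complex.ofReal_cpow (sub_nonneg.2 hx.2), Complex.ofReal_sub,
    Complex.ofReal_one]

lemma intervalIntegrable_rpow_mul_one_sub_rpow {a b : ℝ} (ha : -1 < a) (hb : -1 < b) :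
    IntervalIntegrable (fun x : ℝ => x ^ a * (1 - x) ^ b) volume 0 1 := by
  refine (Complex.betaIntegral_convergent (u := a + 1) (v := b + 1) (by simpa using by linarith)
    (by simpa using by linarith)).norm.congr fun x hx => ?_
  rw [uIoc_of_le zero_le_one] at hx
  rw [← ofReal_rpow_mul_one_sub_rpow (Ioc_subset_Icc_self hx), Complex.norm_real,
    Real.norm_of_nonneg (by have := hx.1; have := hx.2; positivity)]

lemma integral_rpow_mul_one_sub_rpow {a b : ℝ} (ha : -1 < a) (hb : -1 < b) :
    ∫ x in (0:ℝ)..1, x ^ a * (1 - x) ^ b = Gamma (a + 1) * Gamma (b + 1) / Gamma (a + b + 2) := by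
  have hβ : Complex.betaIntegral (a + 1) (b + 1) =
      ((∫ x in (0:ℝ)..1, x ^ a * (1 - x) ^ b : ℝ) : ℂ) := by
    rw [Complex.betaIntegral, ← intervalIntegral.integral_ofReal]
    refine intervalIntegral.integral_congr fun x hx => ?_
    rw [uIcc_of_le zero_le_one] at hx
    exact (ofReal_rpow_mul_one_sub_rpow hx a b).symm
  have h := Complex.betaIntegral_eq_Gamma_mul_div (a + 1) (b + 1) (by simpa using by linarith)
    (by simpa using by linarith)
  rw [hβ, show (a : ℂ) + 1 + (b + 1) = ((a + b + 2 : ℝ) : ℂ) by push_cast; ring] at h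
  rw [← Complex.ofReal_one, ← Complex.ofReal_add, ← Complex.ofReal_add, Complex.Gamma_ofReal,
    Complex.Gamma_ofReal, Complex.Gamma_ofReal] at h
  exact_mod_cast h

lemma hasSum_succ_mul_rpow_add_nat_mul (a b : ℝ) {x : ℝ} (hx : x ∈ Ioo 0 1) :
    HasSum (fun n : ℕ => (n + 1 : ℝ) * (x ^ (a + n) * (1 - x) ^ b))
      (x ^ a * (1 - x) ^ (b - 2)) := by
  have h1x : 0 < 1 - x := sub_pos.2 hx.2
  have hgeom := (hasSum_choose_mul_geometric_of_norm_lt_one 1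
    (by rw [Real.norm_of_nonneg hx.1.le]; exact hx.2)).mul_left (x ^ a * (1 - x) ^ b)
  rw [show x ^ a * (1 - x) ^ (b - 2) = x ^ a * (1 - x) ^ b * (1 / (1 - x) ^ (1 + 1)) by
    rw [rpow_sub h1x, rpow_two]; ring]
  refine hgeom.congr_fun fun n => ?_
  rw [Nat.choose_one_right, rpow_add hx.1, rpow_natCast]
  push_cast
  ring

lemma hasSum_succ_mul_Gamma_div_Gamma {a b : ℝ} (ha : -1 < a) (hb : 1 < b) :
    HasSum
      (fun n : ℕ => Gamma (b + 1) * ((n + 1 : ℝ) * Gamma (a + (n + 1)) / Gamma (a + b + (n + 2))))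
      (∫ x in (0:ℝ)..1, x ^ a * (1 - x) ^ (b - 2)) := by
  set F : ℕ → ℝ → ℝ := fun n x => (n + 1 : ℝ) * (x ^ (a + n) * (1 - x) ^ b)
  have hF_int (n : ℕ) : IntegrableOn (F n) (Ioo 0 1) :=
    ((intervalIntegrable_rpow_mul_one_sub_rpow (by linarith [n.cast_nonneg (α := ℝ)])
      (by linarith)).1.mono_set Ioo_subset_Ioc_self).const_mul _
  have hF_nonneg (n : ℕ) (x : ℝ) (hx : x ∈ Ioo 0 1) : 0 ≤ F n x := by
    have := hx.1; have := sub_pos.2 hx.2; positivity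
  have hF_hasSum :
      ∀ᵐ x ∂volume.restrict (Ioo 0 1), HasSum (F · x) (x ^ a * (1 - x) ^ (b - 2)) :=
    (ae_restrict_mem measurableSet_Ioo).mono fun x hx => hasSum_succ_mul_rpow_add_nat_mul a b hx
  have hsum := hasSum_integral_of_dominated_convergence F
    (fun n => (hF_int n).aestronglyMeasurable)
    (fun n => (ae_restrict_mem measurableSet_Ioo).mono fun x hx =>
      (Real.norm_of_nonneg (hF_nonneg n x hx)).le)
    (hF_hasSum.mono fun x hx => hx.summable)
    (((intervalIntegrable_rpow_mul_one_sub_rpow ha (by linarith)).1.mono_set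
      Ioo_subset_Ioc_self).congr (hF_hasSum.mono fun x hx => hx.tsum_eq.symm))
    hF_hasSum
  rw [intervalIntegral.integral_of_le zero_le_one, integral_Ioc_eq_integral_Ioo]
  refine hsum.congr_fun fun n => ?_
  rw [integral_const_mul, ← integral_Ioc_eq_integral_Ioo,
    ← intervalIntegral.integral_of_le zero_le_one,
    integral_rpow_mul_one_sub_rpow (by linarith [n.cast_nonneg (α := ℝ)]) (by linarith)]
  ring_nf

lemma integral_one_sub_rpow_mul_rpow (a b : ℝ) :
    ∫ x in (0:ℝ)..1, (1 - x) ^ a * x ^ b = ∫ x in (0:ℝ)..1, x ^ a * (1 - x) ^ b := by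
  simpa using intervalIntegral.integral_comp_sub_left (fun x : ℝ => x ^ a * (1 - x) ^ b)
    (a := 0) (b := 1) 1

lemma summable_succ_mul_Gamma_div_Gamma {a c : ℝ} (ha : -1 < a) (hac : a + 1 < c) :
    Summable (fun n : ℕ => (n + 1 : ℝ) * Gamma (a + (n + 1)) / Gamma (c + (n + 2))) := by
  have h := (hasSum_succ_mul_Gamma_div_Gamma ha (b := c - a) (by linarith)).summable
  rwa [summable_mul_left_iff (Gamma_pos_of_pos (by linarith)).ne', add_sub_cancel] at h

lemma continuousAt_succ_mul_pow_mul_Gamma_div_Gamma (a c : ℝ) (n : ℕ) {p : ℝ}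
    (h : 0 < p * c + (n + 2)) :
    ContinuousAt
      (fun p : ℝ => (n + 1 : ℝ) * p ^ n * Gamma (a + (n + 1)) / Gamma (p * c + (n + 2))) p := by
  have hΓ : ContinuousAt Gamma (p * c + (n + 2)) :=
    (differentiableAt_Gamma fun m hm => by linarith [m.cast_nonneg (α := ℝ)]).continuousAt
  have hnum : Continuous fun p : ℝ => (n + 1 : ℝ) * p ^ n * Gamma (a + (n + 1)) := by fun_prop
  exact hnum.continuousAt.div (hΓ.comp (f := fun p : ℝ => p * c + (n + 2)) (by fun_prop))
    (Gamma_pos_of_pos h).ne'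

lemma norm_succ_mul_pow_mul_Gamma_div_Gamma_le {a c p₀ p : ℝ} (n : ℕ) (ha : -1 < a) (hc : 0 ≤ c)
    (hp₀ : 0 ≤ p₀) (hp₀p : p₀ ≤ p) (hp : p ≤ 1) :
    ‖(n + 1 : ℝ) * p ^ n * Gamma (a + (n + 1)) / Gamma (p * c + (n + 2))‖ ≤
      (n + 1 : ℝ) * Gamma (a + (n + 1)) / Gamma (p₀ * c + (n + 2)) := by
  have hp_nonneg : 0 ≤ p := hp₀.trans hp₀p
  have hΓa : 0 < Gamma (a + (n + 1)) := Gamma_pos_of_pos (by linarith [n.cast_nonneg (α := ℝ)])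
  have hΓp₀ : 0 < Gamma (p₀ * c + (n + 2)) := Gamma_pos_of_pos (by positivity)
  have hΓp : 0 < Gamma (p * c + (n + 2)) := Gamma_pos_of_pos (by positivity)
  rw [Real.norm_of_nonneg (by positivity)]
  refine div_le_div₀ (by positivity) ?_ hΓp₀ ?_
  · exact mul_le_mul_of_nonneg_right
      (mul_le_of_le_one_right (by positivity) (pow_le_one₀ hp_nonneg hp)) hΓa.le
  · refine Gamma_strictMonoOn_Ici.monotoneOn ?_ ?_ ?_
    · simp only [mem_Ici]; nlinarith [n.cast_nonneg (α := ℝ), mul_nonneg hp₀ hc]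
    · simp only [mem_Ici]; nlinarith [n.cast_nonneg (α := ℝ), mul_nonneg hp_nonneg hc]
    · linarith [mul_le_mul_of_nonneg_right hp₀p hc]

/-- As `p → 1-`, for `q₁ ≥ 0`, `q₂ > 1` and `q = q₁ + q₂`,
`Γ(q₂+1) ∑_{k=2}^∞ (k-1) p^{k-2} Γ(q₁+k-1)/Γ(pq+k)` converges to
`∫_0^1 (1-x)^{q₁} x^{q₂-2} dx`. (The sum over `k ≥ 2` is indexed by `k = n + 2`.) -/
theorem stmt_11 (q₁ q₂ : ℝ) (h₁ : 0 ≤ q₁) (h₂ : 1 < q₂) :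
    Tendsto
      (fun p : ℝ =>
        Real.Gamma (q₂ + 1) *
          ∑' n : ℕ, ((n + 1 : ℝ) * p ^ n * Real.Gamma (q₁ + (n + 1)) /
            Real.Gamma (p * (q₁ + q₂) + (n + 2))))
      (nhdsWithin 1 (Set.Ioo (0:ℝ) 1))
      (nhds (∫ x in (0:ℝ)..1, (1 - x) ^ q₁ * x ^ (q₂ - 2))) := by
  have hq : 0 < q₁ + q₂ := by linarith
  obtain ⟨p₀, hp₀, hp₀1⟩ := exists_between ((div_lt_one hq).2 (by linarith : q₁ + 1 < q₁ + q₂))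
  have hp₀pos : 0 < p₀ := lt_trans (by positivity) hp₀
  have hdom : ∀ᶠ p in nhdsWithin 1 (Ioo 0 1), ∀ n : ℕ,
      ‖(n + 1 : ℝ) * p ^ n * Gamma (q₁ + (n + 1)) / Gamma (p * (q₁ + q₂) + (n + 2))‖ ≤
        (n + 1 : ℝ) * Gamma (q₁ + (n + 1)) / Gamma (p₀ * (q₁ + q₂) + (n + 2)) := by
    filter_upwards [self_mem_nhdsWithin,
      eventually_nhdsWithin_of_eventually_nhds (eventually_gt_nhds hp₀1)] with p hp hp₀p n
    exact norm_succ_mul_pow_mul_Gamma_div_Gamma_le n (by linarith) hq.le hp₀pos.le hp₀p.le hp.2.le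
  have hlim := tendsto_tsum_of_dominated_convergence
    (summable_succ_mul_Gamma_div_Gamma (by linarith) ((div_lt_iff₀ hq).1 hp₀))
    (fun n => (continuousAt_succ_mul_pow_mul_Gamma_div_Gamma q₁ (q₁ + q₂) n
      (by positivity)).tendsto.mono_left nhdsWithin_le_nhds) hdom
  have hvalue := (hasSum_succ_mul_Gamma_div_Gamma (a := q₁) (by linarith) h₂).tsum_eq
  rw [tsum_mul_left] at hvalue
  simp only [one_pow, one_mul, mul_one] at hlim
  rw [integral_one_sub_rpow_mul_rpow, ← hvalue]
  exact hlim.const_mul _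
end

section
/- For q₁ ≥ 0 and q₂ > 1, ∑_{k=1}^∞ k · Γ(q₁+k) Γ(q₂+1) / Γ(q₁+q₂+k+1) = ∫_0^1 (1-x)^{q₁} x^{q₂-2} dx = Γ(q₁+1)Γ(q₂-1)/Γ(q₁+q₂). -/
open Real MeasureTheory Filter

/-- Real Beta integral. -/
lemma betaInt_aux (a b : ℝ) (ha : 0 < a) (hb : 0 < b) :
    (∫ x in (0:ℝ)..1, x ^ (a - 1) * (1 - x) ^ (b - 1)) =
      Real.Gamma a * Real.Gamma b / Real.Gamma (a + b) := by
  have key : Complex.Gamma a * Complex.Gamma b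
      = Complex.Gamma (a + b) * Complex.betaIntegral a b :=
    Complex.Gamma_mul_Gamma_eq_betaIntegral (by simpa using ha) (by simpa using hb)
  have hbeta : Complex.betaIntegral (a : ℂ) (b : ℂ)
      = ((∫ x in (0:ℝ)..1, x ^ (a - 1) * (1 - x) ^ (b - 1) : ℝ) : ℂ) := by
    rw [Complex.betaIntegral, ← intervalIntegral.integral_ofReal]
    apply intervalIntegral.integral_congr
    intro x hx
    rw [Set.uIcc_of_le (by norm_num : (0:ℝ) ≤ 1)] at hx
    obtain ⟨hx0, hx1⟩ := hx
    push_cast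
    rw [Complex.ofReal_cpow hx0, Complex.ofReal_cpow (by linarith)]
    push_cast
    ring
  rw [hbeta] at key
  have hG : ((Real.Gamma a * Real.Gamma b : ℝ) : ℂ)
      = ((Real.Gamma (a + b) * (∫ x in (0:ℝ)..1, x ^ (a - 1) * (1 - x) ^ (b - 1)) : ℝ) : ℂ) := by
    push_cast [← Complex.Gamma_ofReal]
    exact_mod_cast key
  have h2 := Complex.ofReal_injective hG
  have hne : Real.Gamma (a + b) ≠ 0 := (Real.Gamma_pos_of_pos (by linarith)).ne'
  field_simp
  linarith [h2]

/-- Gamma ratio lower bound from log-convexity: `Γ(x) * x ^ s ≤ Γ(x + s)`. -/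
lemma gamma_ratio_aux {x s : ℝ} (hx : 0 < x) (hs : 1 < s) :
    Real.Gamma x * x ^ s ≤ Real.Gamma (x + s) := by
  have hs0 : 0 < s := by linarith
  have ha : 0 < 1 - 1/s := by
    rw [sub_pos, div_lt_one hs0]; exact hs
  have hb : 0 < 1/s := by positivity
  have h := Real.Gamma_mul_add_mul_le_rpow_Gamma_mul_rpow_Gamma hx
    (show 0 < x + s by linarith) ha hb (by ring)
  have heq : (1 - 1/s) * x + 1/s * (x + s) = x + 1 := by field_simp; ring
  rw [heq, Real.Gamma_add_one hx.ne'] at h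
  -- h : x * Γ x ≤ Γ x ^ (1 - 1/s) * Γ (x+s) ^ (1/s)
  have hGx : 0 < Real.Gamma x := Real.Gamma_pos_of_pos hx
  have hGxs : 0 < Real.Gamma (x + s) := Real.Gamma_pos_of_pos (by linarith)
  have h2 : (x * Real.Gamma x) ^ s ≤ (Real.Gamma x ^ (1 - 1/s) * Real.Gamma (x+s) ^ (1/s)) ^ s :=
    Real.rpow_le_rpow (by positivity) h hs0.le
  rw [Real.mul_rpow hx.le hGx.le, Real.mul_rpow (by positivity) (by positivity)] at h2
  rw [← Real.rpow_mul hGx.le, ← Real.rpow_mul hGxs.le, one_div,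
    inv_mul_cancel₀ hs0.ne', Real.rpow_one, sub_mul, one_mul,
    inv_mul_cancel₀ hs0.ne'] at h2
  -- h2 : x ^ s * Γ x ^ s ≤ Γ x ^ (s - 1) * Γ (x+s)
  have h3 : Real.Gamma x ^ s = Real.Gamma x ^ (s - 1) * Real.Gamma x := by
    rw [← Real.rpow_add_one hGx.ne', sub_add_cancel]
  rw [h3] at h2
  have h4 : 0 < Real.Gamma x ^ (s - 1) := Real.rpow_pos_of_pos hGx _
  calc Real.Gamma x * x ^ s
      = (x ^ s * Real.Gamma x ^ (s-1) * Real.Gamma x) / Real.Gamma x ^ (s-1) := by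
        field_simp
    _ ≤ (Real.Gamma x ^ (s - 1) * Real.Gamma (x + s)) / Real.Gamma x ^ (s-1) := by
        gcongr ?_ / _
        rw [mul_assoc]; exact h2
    _ = Real.Gamma (x + s) := by field_simp

/-- For `q₁ ≥ 0` and `q₂ > 1`,
`∑_{k=1}^∞ k Γ(q₁+k) Γ(q₂+1) / Γ(q₁+q₂+k+1) = ∫_0^1 (1-x)^{q₁} x^{q₂-2} dx
 = Γ(q₁+1)Γ(q₂-1)/Γ(q₁+q₂)`. (The sum over `k ≥ 1` is indexed by `k = n + 1`.) -/
theorem stmt_12 (q₁ q₂ : ℝ) (h₁ : 0 ≤ q₁) (h₂ : 1 < q₂) :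
    (∑' n : ℕ, ((n + 1 : ℝ) * Real.Gamma (q₁ + (n + 1)) * Real.Gamma (q₂ + 1) /
        Real.Gamma (q₁ + q₂ + (n + 1) + 1)) =
      ∫ x in (0:ℝ)..1, (1 - x) ^ q₁ * x ^ (q₂ - 2)) ∧
      (∫ x in (0:ℝ)..1, (1 - x) ^ q₁ * x ^ (q₂ - 2)) =
        Real.Gamma (q₁ + 1) * Real.Gamma (q₂ - 1) / Real.Gamma (q₁ + q₂) := by
  have hbeta : (∫ x in (0:ℝ)..1, (1 - x) ^ q₁ * x ^ (q₂ - 2)) =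
      Real.Gamma (q₁ + 1) * Real.Gamma (q₂ - 1) / Real.Gamma (q₁ + q₂) := by
    have h := betaInt_aux (q₂ - 1) (q₁ + 1) (by linarith) (by linarith)
    rw [show q₂ - 1 - 1 = q₂ - 2 by ring, show q₁ + 1 - 1 = q₁ by ring,
      show q₂ - 1 + (q₁ + 1) = q₁ + q₂ by ring] at h
    rw [mul_comm (Real.Gamma (q₁+1)), ← h]
    apply intervalIntegral.integral_congr
    intro x _
    ring
  refine ⟨?_, hbeta⟩
  rw [hbeta]
  -- telescoping sum
  set α : ℝ := (q₂ - 1)⁻¹ with hα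
  set β : ℝ := q₁ / (q₂ * (q₂ - 1)) with hβ
  have hq₂ : (0:ℝ) < q₂ := by linarith
  have hq₂1 : (0:ℝ) < q₂ - 1 := by linarith
  set T : ℕ → ℝ := fun n => (α * (n + 1) + β) * Real.Gamma (q₁ + n + 1) /
      Real.Gamma (q₁ + q₂ + n + 1) with hT
  set f : ℕ → ℝ := fun n => (n + 1 : ℝ) * Real.Gamma (q₁ + (n + 1)) * Real.Gamma (q₂ + 1) /
      Real.Gamma (q₁ + q₂ + (n + 1) + 1) with hf
  have hfnn : ∀ n, 0 ≤ f n := by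
    intro n
    have := Real.Gamma_pos_of_pos (show (0:ℝ) < q₁ + (n+1) by positivity)
    have := Real.Gamma_pos_of_pos (show (0:ℝ) < q₂ + 1 by linarith)
    have := Real.Gamma_pos_of_pos (show (0:ℝ) < q₁ + q₂ + (n+1) + 1 by positivity)
    have hn : (0:ℝ) ≤ (n:ℝ) + 1 := by positivity
    rw [hf]
    positivity
  have hstep : ∀ n : ℕ, f n = Real.Gamma (q₂ + 1) * (T n - T (n + 1)) := by
    intro n
    have hx : (0:ℝ) < q₁ + n + 1 := by positivity
    have hy : (0:ℝ) < q₁ + q₂ + n + 1 := by positivity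
    have hGx : 0 < Real.Gamma (q₁ + n + 1) := Real.Gamma_pos_of_pos hx
    have hGy : 0 < Real.Gamma (q₁ + q₂ + n + 1) := Real.Gamma_pos_of_pos hy
    have e1 : Real.Gamma (q₁ + (n+1) + 1) = (q₁ + n + 1) * Real.Gamma (q₁ + n + 1) := by
      rw [show q₁ + ((n:ℝ)+1) + 1 = (q₁ + n + 1) + 1 by ring, Real.Gamma_add_one hx.ne']
    have e2 : Real.Gamma (q₁ + q₂ + (n+1) + 1) = (q₁ + q₂ + n + 1) * Real.Gamma (q₁ + q₂ + n + 1) := by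
      rw [show q₁ + q₂ + ((n:ℝ)+1) + 1 = (q₁ + q₂ + n + 1) + 1 by ring, Real.Gamma_add_one hy.ne']
    rw [hf, hT]
    simp only
    rw [e2, show q₁ + ((n:ℝ)+1) = q₁ + n + 1 by ring,
      show q₁ + ((n:ℕ)+1:ℕ) + 1 = q₁ + (n+1) + 1 by push_cast; ring,
      show q₁ + q₂ + ((n:ℕ)+1:ℕ) + 1 = q₁ + q₂ + n + 1 + 1 by push_cast; ring,
      e1, Real.Gamma_add_one hy.ne']
    push_cast
    rw [hα, hβ]
    have hq2ne : q₂ ≠ 0 := hq₂.ne'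
    have hq21ne : q₂ - 1 ≠ 0 := hq₂1.ne'
    field_simp
    ring
  have hTlim : Filter.Tendsto T Filter.atTop (nhds 0) := by
    have hub : ∀ n : ℕ, T n ≤ (α + β) * ((n:ℝ) + 1) ^ (1 - q₂) := by
      intro n
      have hx : (0:ℝ) < q₁ + n + 1 := by positivity
      have hGx : 0 < Real.Gamma (q₁ + n + 1) := Real.Gamma_pos_of_pos hx
      have hGy : 0 < Real.Gamma (q₁ + q₂ + n + 1) := Real.Gamma_pos_of_pos (by positivity)
      have hrat := gamma_ratio_aux hx h₂
      rw [show q₁ + n + 1 + q₂ = q₁ + q₂ + n + 1 by ring] at hrat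
      have hn1 : (0:ℝ) < (n:ℝ) + 1 := by positivity
      have hpow : ((n:ℝ) + 1) ^ q₂ ≤ (q₁ + n + 1) ^ q₂ :=
        Real.rpow_le_rpow hn1.le (by linarith) hq₂.le
      have hc : α * (n + 1) + β ≤ (α + β) * ((n:ℝ) + 1) := by
        have hαpos : 0 ≤ α := by positivity
        have hβpos : 0 ≤ β := by positivity
        nlinarith
      have hT1 : T n ≤ (α * (n + 1) + β) / ((n:ℝ) + 1) ^ q₂ := by
        rw [hT]
        simp only
        rw [div_le_div_iff₀ hGy (by positivity)]
        have hcnn : 0 ≤ α * (n + 1) + β := by positivity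
        calc (α * (↑n + 1) + β) * Real.Gamma (q₁ + ↑n + 1) * ((n:ℝ) + 1) ^ q₂
            ≤ (α * (↑n + 1) + β) * Real.Gamma (q₁ + ↑n + 1) * (q₁ + ↑n + 1) ^ q₂ := by
              apply mul_le_mul_of_nonneg_left hpow (by positivity)
          _ ≤ (α * (↑n + 1) + β) * Real.Gamma (q₁ + q₂ + ↑n + 1) := by
              rw [mul_assoc]
              exact mul_le_mul_of_nonneg_left hrat hcnn
      refine hT1.trans ?_
      rw [Real.rpow_sub hn1, Real.rpow_one, mul_div_assoc']
      gcongr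
    have hlb : ∀ n : ℕ, 0 ≤ T n := by
      intro n
      have hGx : 0 < Real.Gamma (q₁ + n + 1) := Real.Gamma_pos_of_pos (by positivity)
      have hGy : 0 < Real.Gamma (q₁ + q₂ + n + 1) := Real.Gamma_pos_of_pos (by positivity)
      rw [hT]; simp only
      have : (0:ℝ) ≤ α * (n + 1) + β := by positivity
      positivity
    have hub_lim : Filter.Tendsto (fun n : ℕ => (α + β) * ((n:ℝ) + 1) ^ (1 - q₂))
        Filter.atTop (nhds 0) := by
      have h1 : Filter.Tendsto (fun n : ℕ => ((n:ℝ) + 1)) Filter.atTop Filter.atTop :=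
        Filter.tendsto_atTop_add_const_right _ _ tendsto_natCast_atTop_atTop
      have h2' : Filter.Tendsto (fun x : ℝ => x ^ (-(q₂ - 1))) Filter.atTop (nhds 0) :=
        tendsto_rpow_neg_atTop hq₂1
      have := (h2'.comp h1).const_mul (α + β)
      simpa [mul_zero, show -(q₂-1) = 1 - q₂ by ring] using this
    exact squeeze_zero hlb hub hub_lim
  -- conclude
  have hsum : HasSum f (Real.Gamma (q₂ + 1) * T 0) := by
    rw [hasSum_iff_tendsto_nat_of_nonneg hfnn]
    have hps : ∀ n, ∑ i ∈ Finset.range n, f i = Real.Gamma (q₂ + 1) * (T 0 - T n) := by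
      intro n
      calc ∑ i ∈ Finset.range n, f i
          = ∑ i ∈ Finset.range n, (Real.Gamma (q₂+1) * T i - Real.Gamma (q₂+1) * T (i+1)) := by
            apply Finset.sum_congr rfl; intro i _; rw [hstep i]; ring
        _ = Real.Gamma (q₂+1) * T 0 - Real.Gamma (q₂+1) * T n := Finset.sum_range_sub' _ n
        _ = Real.Gamma (q₂ + 1) * (T 0 - T n) := by ring
    simp only [hps]
    have := ((tendsto_const_nhds (x := T 0)).sub hTlim).const_mul (Real.Gamma (q₂ + 1))
    simpa using this
  rw [hsum.tsum_eq]
  -- evaluate Γ(q₂+1) * T 0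
  have hT0 : T 0 = (α * 1 + β) * Real.Gamma (q₁ + 1) / Real.Gamma (q₁ + q₂ + 1) := by
    rw [hT]; push_cast; ring_nf
  have e1 : Real.Gamma (q₂ + 1) = q₂ * (q₂ - 1) * Real.Gamma (q₂ - 1) := by
    rw [Real.Gamma_add_one hq₂.ne', show q₂ = (q₂ - 1) + 1 by ring, Real.Gamma_add_one hq₂1.ne']
    ring_nf
  have e2 : Real.Gamma (q₁ + q₂ + 1) = (q₁ + q₂) * Real.Gamma (q₁ + q₂) := by
    rw [show q₁ + q₂ + 1 = (q₁ + q₂) + 1 by ring, Real.Gamma_add_one (by positivity)]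
  rw [hT0, e1, e2, hα, hβ]
  have hGq : Real.Gamma (q₁ + q₂) ≠ 0 := (Real.Gamma_pos_of_pos (by linarith)).ne'
  have hsum' : q₁ + q₂ ≠ 0 := by positivity
  field_simp
  ring
end

section
/- Let α ∈ (0,1), let X, X' be independent positive random variables with E[X^q] = Γ(q+1)/Γ(αq+1) and E[(X')^q] = Γ(q+1)/Γ(βq+1) for all q ≥ 0, where β ∈ (0,1). Then the random variable X^{β} · X' satisfies E[(X^{β} X')^q] = Γ(q+1)/Γ(αβ q + 1) for all q ≥ 0. -/
open MeasureTheory ProbabilityTheory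

theorem ProbabilityTheory.IndepFun.integral_mul_rpow {Ω : Type*} [MeasurableSpace Ω]
    {μ : Measure Ω} {Y Z : Ω → ℝ} (hYZ : IndepFun Y Z μ) (hY : AEMeasurable Y μ)
    (hZ : AEMeasurable Z μ) (hY0 : ∀ ω, 0 ≤ Y ω) (hZ0 : ∀ ω, 0 ≤ Z ω) (q : ℝ) :
    ∫ ω, (Y ω * Z ω) ^ q ∂μ = (∫ ω, Y ω ^ q ∂μ) * ∫ ω, Z ω ^ q ∂μ := by
  have hpow : Measurable fun x : ℝ => x ^ q := measurable_id.pow_const q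
  simp_rw [Real.mul_rpow (hY0 _) (hZ0 _)]
  exact hYZ.integral_fun_comp_mul_comp hY hZ hpow.aestronglyMeasurable hpow.aestronglyMeasurable

theorem stmt_16_general {Ω : Type*} [MeasurableSpace Ω] (P : Measure Ω)
    (α β : ℝ) (hβ : β ∈ Set.Ioo (0:ℝ) 1)
    (X X' : Ω → ℝ) (hXm : Measurable X) (hX'm : Measurable X')
    (hXpos : ∀ ω, 0 < X ω) (hX'pos : ∀ ω, 0 < X' ω)
    (hX : ∀ q : ℝ, 0 ≤ q → ∫ ω, X ω ^ q ∂P = Real.Gamma (q + 1) / Real.Gamma (α * q + 1))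
    (hX' : ∀ q : ℝ, 0 ≤ q →
      ∫ ω, X' ω ^ q ∂P = Real.Gamma (q + 1) / Real.Gamma (β * q + 1))
    (hindep : IndepFun X X' P) :
    ∀ q : ℝ, 0 ≤ q →
      ∫ ω, (X ω ^ β * X' ω) ^ q ∂P =
        Real.Gamma (q + 1) / Real.Gamma (α * β * q + 1) := by
  intro q hq
  have hβq : 0 ≤ β * q := mul_nonneg hβ.1.le hq
  have hindep' : IndepFun (fun ω => X ω ^ β) X' P :=
    hindep.comp (measurable_id.pow_const β) measurable_id
  calc ∫ ω, (X ω ^ β * X' ω) ^ q ∂P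
      = (∫ ω, (X ω ^ β) ^ q ∂P) * ∫ ω, X' ω ^ q ∂P :=
        hindep'.integral_mul_rpow (hXm.pow_const β).aemeasurable hX'm.aemeasurable
          (fun ω => (Real.rpow_pos_of_pos (hXpos ω) β).le) (fun ω => (hX'pos ω).le) q
    _ = (∫ ω, X ω ^ (β * q) ∂P) * ∫ ω, X' ω ^ q ∂P := by
        simp_rw [Real.rpow_mul (hXpos _).le]
    _ = Real.Gamma (q + 1) / Real.Gamma (α * β * q + 1) := by
        rw [hX _ hβq, hX' q hq, ← mul_assoc,
          div_mul_div_cancel₀' (Real.Gamma_pos_of_pos (by linarith)).ne']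

/-- Semigroup property of Mittag-Leffler Mellin transforms: if `X, X'` are independent
positive random variables with `E[X^q] = Γ(q+1)/Γ(αq+1)` and
`E[(X')^q] = Γ(q+1)/Γ(βq+1)` for all `q ≥ 0`, with `α, β ∈ (0,1)`, then
`E[(X^β X')^q] = Γ(q+1)/Γ(αβq+1)` for all `q ≥ 0`. -/
theorem stmt_16 {Ω : Type*} [MeasurableSpace Ω] (P : Measure Ω) [IsProbabilityMeasure P]
    (α β : ℝ) (hα : α ∈ Set.Ioo (0:ℝ) 1) (hβ : β ∈ Set.Ioo (0:ℝ) 1)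
    (X X' : Ω → ℝ) (hXm : Measurable X) (hX'm : Measurable X')
    (hXpos : ∀ ω, 0 < X ω) (hX'pos : ∀ ω, 0 < X' ω)
    (hX : ∀ q : ℝ, 0 ≤ q → ∫ ω, X ω ^ q ∂P = Real.Gamma (q + 1) / Real.Gamma (α * q + 1))
    (hX' : ∀ q : ℝ, 0 ≤ q →
      ∫ ω, X' ω ^ q ∂P = Real.Gamma (q + 1) / Real.Gamma (β * q + 1))
    (hindep : IndepFun X X' P) :
    ∀ q : ℝ, 0 ≤ q →
      ∫ ω, (X ω ^ β * X' ω) ^ q ∂P =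
        Real.Gamma (q + 1) / Real.Gamma (α * β * q + 1) :=
  stmt_16_general P α β hβ X X' hXm hX'm hXpos hX'pos hX hX' hindep
end

section
/- If X has Mellin transform E[X^q] = Γ(q+1)/Γ(αq+1) for all q ≥ 0 with α ∈ (0,1), then X → 1 in probability as α → 1-; i.e., for every ε > 0, there exists δ > 0 such that for all α ∈ (1-δ, 1), P(|X_α - 1| > ε) < ε, where X_α has the above Mellin transform. -/
/-!
By Chebyshev's inequality around `1`, `P(|X_α - 1| > ε) ≤ E[(X_α - 1)²] / ε²`, and the second
moment about `1` is expanded through the first two Mellin moments: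
`E[(X_α - 1)²] = Γ(3)/Γ(2α+1) - 2 Γ(2)/Γ(α+1) + 1`. By continuity of `Γ` on `(0, ∞)` each moment
`Γ(q+1)/Γ(αq+1)` tends to `1` as `α → 1`, so this tends to `1 - 2 + 1 = 0`.
-/

open MeasureTheory Filter Topology

theorem Real.continuousAt_Gamma_of_pos {s : ℝ} (hs : 0 < s) : ContinuousAt Real.Gamma s :=
  (Real.differentiableAt_Gamma fun m hm => by linarith [(m.cast_nonneg : (0 : ℝ) ≤ m)]).continuousAt

noncomputable def mittagLefflerMoment (α q : ℝ) : ℝ := Real.Gamma (q + 1) / Real.Gamma (α * q + 1)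

theorem mittagLefflerMoment_pos {α q : ℝ} (hα : 0 ≤ α) (hq : 0 ≤ q) :
    0 < mittagLefflerMoment α q :=
  div_pos (Real.Gamma_pos_of_pos (by positivity)) (Real.Gamma_pos_of_pos (by positivity))

theorem tendsto_mittagLefflerMoment_nhds_one {q : ℝ} (hq : 0 ≤ q) :
    Tendsto (fun α => mittagLefflerMoment α q) (𝓝 1) (𝓝 1) := by
  have hΓ : ContinuousAt (fun α : ℝ => Real.Gamma (α * q + 1)) 1 := by
    refine ContinuousAt.comp (g := Real.Gamma) ?_ (by fun_prop)
    exact Real.continuousAt_Gamma_of_pos (by positivity)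
  have hne : Real.Gamma (q + 1) ≠ 0 := (Real.Gamma_pos_of_pos (by positivity)).ne'
  have hquot := (continuousAt_const (y := Real.Gamma (q + 1))).div₀ hΓ (by simpa using hne)
  simpa [mittagLefflerMoment, hne] using hquot.tendsto

section Chebyshev

variable {Ω : Type*} [MeasurableSpace Ω] {μ : Measure Ω} {f : Ω → ℝ}

theorem measure_lt_abs_sub_le_integral_sq_div [IsFiniteMeasure μ] (c : ℝ) {ε : ℝ} (hε : 0 < ε)
    (hf : Integrable (fun ω => (f ω - c) ^ 2) μ) :
    μ {ω | ε < |f ω - c|} ≤ ENNReal.ofReal ((∫ ω, (f ω - c) ^ 2 ∂μ) / ε ^ 2) := by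
  have hsub : {ω | ε < |f ω - c|} ⊆ {ω | ε ^ 2 ≤ (f ω - c) ^ 2} := fun ω hω =>
    (pow_le_pow_left₀ hε.le (le_of_lt hω) 2).trans_eq (sq_abs _)
  have markov :=
    mul_meas_ge_le_integral_of_nonneg (ae_of_all μ fun ω => sq_nonneg (f ω - c)) hf (ε ^ 2)
  calc μ {ω | ε < |f ω - c|} ≤ μ {ω | ε ^ 2 ≤ (f ω - c) ^ 2} := measure_mono hsub
    _ = ENNReal.ofReal (μ.real {ω | ε ^ 2 ≤ (f ω - c) ^ 2}) :=
        (ofReal_measureReal (measure_ne_top _ _)).symm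
    _ ≤ _ := ENNReal.ofReal_le_ofReal ((le_div_iff₀' (by positivity)).2 markov)

theorem integral_sub_sq [IsProbabilityMeasure μ] (hf : Integrable f μ)
    (hf2 : Integrable (fun ω => f ω ^ 2) μ) (c : ℝ) :
    ∫ ω, (f ω - c) ^ 2 ∂μ = ∫ ω, f ω ^ 2 ∂μ - 2 * c * ∫ ω, f ω ∂μ + c ^ 2 := by
  have hexp : (fun ω => (f ω - c) ^ 2) = fun ω => f ω ^ 2 - 2 * c * f ω + c ^ 2 := by
    funext ω; ring
  have hlin : Integrable (fun ω => f ω ^ 2 - 2 * c * f ω) μ := hf2.sub (hf.const_mul _)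
  rw [hexp, integral_add hlin (integrable_const _), integral_sub hf2 (hf.const_mul _),
    integral_const_mul, integral_const]
  simp

theorem measure_lt_abs_sub_le_of_moments [IsProbabilityMeasure μ] {m₁ m₂ : ℝ}
    (h₁ : ∫ ω, f ω ∂μ = m₁) (h₂ : ∫ ω, f ω ^ 2 ∂μ = m₂) (hm₁ : m₁ ≠ 0) (hm₂ : m₂ ≠ 0) (c : ℝ)
    {ε : ℝ} (hε : 0 < ε) :
    μ {ω | ε < |f ω - c|} ≤ ENNReal.ofReal ((m₂ - 2 * c * m₁ + c ^ 2) / ε ^ 2) := by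
  have hf : Integrable f μ := .of_integral_ne_zero (h₁ ▸ hm₁)
  have hf2 : Integrable (fun ω => f ω ^ 2) μ := .of_integral_ne_zero (h₂ ▸ hm₂)
  have hsq : Integrable (fun ω => (f ω - c) ^ 2) μ := by
    refine ((hf2.sub (hf.const_mul (2 * c))).add (integrable_const (c ^ 2))).congr
      (ae_of_all μ fun ω => ?_)
    simp only [Pi.add_apply, Pi.sub_apply]
    ring
  simpa only [integral_sub_sq hf hf2, h₁, h₂] using measure_lt_abs_sub_le_integral_sq_div c hε hsq

end Chebyshev

theorem stmt_18_general {Ω : Type*} [MeasurableSpace Ω] (P : Measure Ω) [IsProbabilityMeasure P]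
    (X : ℝ → Ω → ℝ)
    (hX : ∀ α ∈ Set.Ioo (0:ℝ) 1, ∀ q : ℝ, 0 ≤ q →
      ∫ ω, X α ω ^ q ∂P = Real.Gamma (q + 1) / Real.Gamma (α * q + 1)) :
    ∀ ε : ℝ, 0 < ε → ∃ δ : ℝ, 0 < δ ∧ ∀ α : ℝ, 1 - δ < α → α < 1 →
      P {ω | ε < |X α ω - 1|} < ENNReal.ofReal ε := by
  intro ε hε
  have hlim : Tendsto (fun α => mittagLefflerMoment α 2 - 2 * mittagLefflerMoment α 1 + 1)
      (𝓝 1) (𝓝 0) := by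
    convert ((tendsto_mittagLefflerMoment_nhds_one zero_le_two).sub
      ((tendsto_mittagLefflerMoment_nhds_one zero_le_one).const_mul 2)).add_const 1 using 2
    norm_num
  have hev : ∀ᶠ α in 𝓝[<] 1, α ∈ Set.Ioo 0 1 ∧
      mittagLefflerMoment α 2 - 2 * mittagLefflerMoment α 1 + 1 < ε ^ 3 :=
    Eventually.and (Ioo_mem_nhdsLT one_pos)
      ((hlim.mono_left nhdsWithin_le_nhds).eventually_lt_const (by positivity))
  obtain ⟨l, hl, hsub⟩ := mem_nhdsLT_iff_exists_Ioo_subset.1 hev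
  refine ⟨1 - l, by linarith [Set.mem_Iio.1 hl], fun α hlα hα1 => ?_⟩
  obtain ⟨hα, hsmall⟩ := hsub ⟨by linarith, hα1⟩
  have hmom : ∀ q : ℝ, 0 ≤ q → ∫ ω, X α ω ^ q ∂P = mittagLefflerMoment α q := hX α hα
  calc P {ω | ε < |X α ω - 1|}
      ≤ ENNReal.ofReal ((mittagLefflerMoment α 2 - 2 * mittagLefflerMoment α 1 + 1) / ε ^ 2) :=
        (measure_lt_abs_sub_le_of_moments (by simpa using hmom 1 zero_le_one)
          (by simpa using hmom 2 zero_le_two)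
          (mittagLefflerMoment_pos hα.1.le zero_le_one).ne'
          (mittagLefflerMoment_pos hα.1.le zero_le_two).ne' 1 hε).trans_eq (by norm_num)
    _ < ENNReal.ofReal ε := by
        rw [ENNReal.ofReal_lt_ofReal_iff hε, div_lt_iff₀ (by positivity)]
        linarith

/-- If `X α` has Mellin transform `E[(X α)^q] = Γ(q+1)/Γ(αq+1)` for `α ∈ (0,1)`, then
`X α → 1` in probability as `α → 1-`: for every `ε > 0` there is `δ > 0` such that for
all `α ∈ (1-δ, 1)`, `P(|X α - 1| > ε) < ε`. -/
theorem stmt_18 {Ω : Type*} [MeasurableSpace Ω] (P : Measure Ω) [IsProbabilityMeasure P]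
    (X : ℝ → Ω → ℝ) (hXm : ∀ α, Measurable (X α)) (hXnn : ∀ α ω, 0 ≤ X α ω)
    (hX : ∀ α ∈ Set.Ioo (0:ℝ) 1, ∀ q : ℝ, 0 ≤ q →
      ∫ ω, X α ω ^ q ∂P = Real.Gamma (q + 1) / Real.Gamma (α * q + 1)) :
    ∀ ε : ℝ, 0 < ε → ∃ δ : ℝ, 0 < δ ∧ ∀ α : ℝ, 1 - δ < α → α < 1 →
      P {ω | ε < |X α ω - 1|} < ENNReal.ofReal ε :=
  stmt_18_general P X hX
end
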